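/- Let A₁, A₂ be smooth real-valued functions on ℝ² and set b = ∂A₂/∂x₁ − ∂A₁/∂x₂. Then for every u ∈ C_c^∞(ℝ², ℂ): ∫_{ℝ²} b(x)|u(x)|² dx ≤ ‖(D_{x₁} − A₁)u‖² + ‖(D_{x₂} − A₂)u‖², where D_{x_k} = (1/i) ∂/∂x_k and the norms are in L²(ℝ²). -/

import Mathlib

open MeasureTheory Complex

private lemma integral_deriv_eq_zero_of_cs {f : ℝ → ℝ}
    (hf : ContDiff ℝ 1 f) (h2f : HasCompactSupport f) : ∫ x : ℝ, deriv f x = 0 := by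
  have hc : Continuous (deriv f) := hf.continuous_deriv le_rfl
  have hcs : HasCompactSupport (deriv f) := h2f.deriv
  have hint : Integrable (deriv f) := hc.integrable_of_hasCompactSupport hcs
  have h1 := HasCompactSupport.integral_Iic_deriv_eq hf h2f 0
  have h2 := HasCompactSupport.integral_Ioi_deriv_eq hf h2f 0
  rw [← intervalIntegral.integral_Iic_add_Ioi hint.integrableOn hint.integrableOn, h1, h2]
  ring

private lemma hcs_fderiv_apply {g : ℝ × ℝ → ℝ} (hgs : HasCompactSupport g) (v : ℝ × ℝ) :
    HasCompactSupport fun x : ℝ × ℝ => fderiv ℝ g x v := by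
  apply (hgs.fderiv ℝ).mono'
  intro x hx
  apply subset_tsupport
  simp only [Function.mem_support] at hx ⊢
  intro h; exact hx (by simp [h])

private lemma integral_fderiv_fst_eq_zero {g : ℝ × ℝ → ℝ}
    (hg : ContDiff ℝ 1 g) (hgs : HasCompactSupport g) :
    ∫ x : ℝ × ℝ, fderiv ℝ g x (1, 0) = 0 := by
  have hgc : Continuous fun x : ℝ × ℝ => fderiv ℝ g x (1, 0) :=
    (hg.continuous_fderiv one_ne_zero).clm_apply continuous_const
  have hint : Integrable (fun x : ℝ × ℝ => fderiv ℝ g x (1, 0)) :=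
    hgc.integrable_of_hasCompactSupport (hcs_fderiv_apply hgs _)
  rw [Measure.volume_eq_prod ℝ ℝ] at hint ⊢
  rw [MeasureTheory.integral_prod_symm _ hint]
  have key : ∀ y : ℝ, (∫ x : ℝ, fderiv ℝ g (x, y) (1, 0)) = 0 := by
    intro y
    have hline : ContDiff ℝ 1 fun t : ℝ => g (t, y) := hg.comp (contDiff_id.prodMk contDiff_const)
    have hlcs : HasCompactSupport fun t : ℝ => g (t, y) :=
      hgs.comp_isClosedEmbedding
        (Isometry.of_dist_eq fun a b => by
          simp [Prod.dist_eq, max_eq_left dist_nonneg]).isClosedEmbedding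
    have hd : ∀ t : ℝ, deriv (fun s : ℝ => g (s, y)) t = fderiv ℝ g (t, y) (1, 0) := by
      intro t
      have h1 : HasDerivAt (fun s : ℝ => ((s : ℝ), y)) ((1 : ℝ), (0 : ℝ)) t :=
        (hasDerivAt_id t).prodMk (hasDerivAt_const t y)
      exact (((hg.differentiable one_ne_zero) (t, y)).hasFDerivAt.comp_hasDerivAt t h1).deriv
    rw [show (fun x : ℝ => fderiv ℝ g (x, y) (1, 0))
        = fun x : ℝ => deriv (fun s : ℝ => g (s, y)) x from funext fun t => (hd t).symm]
    exact integral_deriv_eq_zero_of_cs hline hlcs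
  simp [key]

private lemma integral_fderiv_snd_eq_zero {g : ℝ × ℝ → ℝ}
    (hg : ContDiff ℝ 1 g) (hgs : HasCompactSupport g) :
    ∫ x : ℝ × ℝ, fderiv ℝ g x (0, 1) = 0 := by
  have hgc : Continuous fun x : ℝ × ℝ => fderiv ℝ g x (0, 1) :=
    (hg.continuous_fderiv one_ne_zero).clm_apply continuous_const
  have hint : Integrable (fun x : ℝ × ℝ => fderiv ℝ g x (0, 1)) :=
    hgc.integrable_of_hasCompactSupport (hcs_fderiv_apply hgs _)
  rw [Measure.volume_eq_prod ℝ ℝ] at hint ⊢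
  rw [MeasureTheory.integral_prod _ hint]
  have key : ∀ x : ℝ, (∫ y : ℝ, fderiv ℝ g (x, y) (0, 1)) = 0 := by
    intro x
    have hline : ContDiff ℝ 1 fun t : ℝ => g (x, t) := hg.comp (contDiff_const.prodMk contDiff_id)
    have hlcs : HasCompactSupport fun t : ℝ => g (x, t) :=
      hgs.comp_isClosedEmbedding
        (Isometry.of_dist_eq fun a b => by
          simp [Prod.dist_eq, max_eq_right dist_nonneg]).isClosedEmbedding
    have hd : ∀ t : ℝ, deriv (fun s : ℝ => g (x, s)) t = fderiv ℝ g (x, t) (0, 1) := by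
      intro t
      have h1 : HasDerivAt (fun s : ℝ => (x, (s : ℝ))) ((0 : ℝ), (1 : ℝ)) t :=
        (hasDerivAt_const t x).prodMk (hasDerivAt_id t)
      exact (((hg.differentiable one_ne_zero) (x, t)).hasFDerivAt.comp_hasDerivAt t h1).deriv
    rw [show (fun y : ℝ => fderiv ℝ g (x, y) (0, 1))
        = fun y : ℝ => deriv (fun s : ℝ => g (x, s)) y from funext fun t => (hd t).symm]
    exact integral_deriv_eq_zero_of_cs hline hlcs
  simp [key]

private lemma two_im_conj_mul_le (z w : ℂ) :
    2 * ((starRingEnd ℂ) z * w).im ≤ ‖z‖ ^ 2 + ‖w‖ ^ 2 := by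
  have h1 : ((starRingEnd ℂ) z * w).im ≤ ‖z‖ * ‖w‖ := by
    calc ((starRingEnd ℂ) z * w).im ≤ ‖(starRingEnd ℂ) z * w‖ :=
          Complex.im_le_norm _
      _ = ‖z‖ * ‖w‖ := by
          rw [norm_mul, Complex.norm_conj]
  nlinarith [sq_nonneg (‖z‖ - ‖w‖)]

/-- Let `A₁, A₂` be smooth real-valued functions on `ℝ²` and `b = ∂A₂/∂x₁ − ∂A₁/∂x₂`.
Then for every `u ∈ C_c^∞(ℝ², ℂ)`:
`∫ b |u|² ≤ ‖(D_{x₁} − A₁)u‖² + ‖(D_{x₂} − A₂)u‖²`,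
where `D_{x_k} = (1/i) ∂/∂x_k = −i ∂/∂x_k` and the norms are `L²(ℝ²)` norms. -/
theorem magnetic_field_quadratic_form_bound
    (A₁ A₂ : ℝ × ℝ → ℝ) (hA₁ : ContDiff ℝ (⊤ : ℕ∞) A₁) (hA₂ : ContDiff ℝ (⊤ : ℕ∞) A₂)
    (u : ℝ × ℝ → ℂ) (hu : ContDiff ℝ (⊤ : ℕ∞) u) (hsupp : HasCompactSupport u) :
    (∫ x : ℝ × ℝ, (fderiv ℝ A₂ x (1, 0) - fderiv ℝ A₁ x (0, 1)) * ‖u x‖ ^ 2) ≤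
      (∫ x : ℝ × ℝ, ‖(-Complex.I) * fderiv ℝ u x (1, 0) - (A₁ x : ℂ) * u x‖ ^ 2) +
        (∫ x : ℝ × ℝ, ‖(-Complex.I) * fderiv ℝ u x (0, 1) - (A₂ x : ℂ) * u x‖ ^ 2) := by
  have hud : Differentiable ℝ u := hu.differentiable (by simp)
  have hu' : ContDiff ℝ (⊤ : ℕ∞) (fderiv ℝ u) := hu.fderiv_right (by simp)
  have hud2 : Differentiable ℝ (fderiv ℝ u) := hu'.differentiable (by simp)
  have hA₁d : Differentiable ℝ A₁ := hA₁.differentiable (by simp)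
  have hA₂d : Differentiable ℝ A₂ := hA₂.differentiable (by simp)
  set F₁ : ℝ × ℝ → ℝ := fun x =>
    A₂ x * ((starRingEnd ℂ) (u x) * u x).re - ((starRingEnd ℂ) (u x) * fderiv ℝ u x (0, 1)).im
    with hF₁def
  set F₂ : ℝ × ℝ → ℝ := fun x =>
    -(A₁ x * ((starRingEnd ℂ) (u x) * u x).re) + ((starRingEnd ℂ) (u x) * fderiv ℝ u x (1, 0)).im
    with hF₂def
  -- vanishing outside the support of u
  have hvan : ∀ x : ℝ × ℝ, x ∉ tsupport u → u x = 0 ∧ fderiv ℝ u x = 0 := by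
    intro x hx
    refine ⟨image_eq_zero_of_notMem_tsupport hx, ?_⟩
    by_contra h
    exact hx (support_fderiv_subset ℝ (Function.mem_support.2 h))
  -- pointwise identity
  have keyder : ∀ x : ℝ × ℝ,
      (fderiv ℝ A₂ x (1, 0) - fderiv ℝ A₁ x (0, 1)) * ‖u x‖ ^ 2
        = 2 * ((starRingEnd ℂ) ((-Complex.I) * fderiv ℝ u x (1, 0) - (A₁ x : ℂ) * u x)
              * ((-Complex.I) * fderiv ℝ u x (0, 1) - (A₂ x : ℂ) * u x)).im
          + (fderiv ℝ F₁ x (1, 0) + fderiv ℝ F₂ x (0, 1)) := by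
    intro x
    have hu'x : HasFDerivAt u (fderiv ℝ u x) x := (hud x).hasFDerivAt
    have h2 : HasFDerivAt (fderiv ℝ u) (fderiv ℝ (fderiv ℝ u) x) x := (hud2 x).hasFDerivAt
    have hdv : ∀ v : ℝ × ℝ, HasFDerivAt (fun y => fderiv ℝ u y v)
        ((ContinuousLinearMap.apply ℝ ℂ v).comp (fderiv ℝ (fderiv ℝ u) x)) x :=
      fun v => (ContinuousLinearMap.apply ℝ ℂ v).hasFDerivAt.comp x h2
    have hconj : HasFDerivAt (fun y => (starRingEnd ℂ) (u y))
        ((Complex.conjCLE : ℂ →L[ℝ] ℂ).comp (fderiv ℝ u x)) x :=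
      (Complex.conjCLE : ℂ →L[ℝ] ℂ).hasFDerivAt.comp x hu'x
    have hA₁x : HasFDerivAt A₁ (fderiv ℝ A₁ x) x := (hA₁d x).hasFDerivAt
    have hA₂x : HasFDerivAt A₂ (fderiv ℝ A₂ x) x := (hA₂d x).hasFDerivAt
    have hmul1 := hconj.mul' hu'x
    have hN : HasFDerivAt (fun y => ((starRingEnd ℂ) (u y) * u y).re)
        (Complex.reCLM.comp ((starRingEnd ℂ) (u x) • fderiv ℝ u x +
          (((Complex.conjCLE : ℂ →L[ℝ] ℂ).comp (fderiv ℝ u x)).smulRight (u x)))) x :=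
      Complex.reCLM.hasFDerivAt.comp x hmul1
    have hT1 := hA₂x.mul hN
    have hmul2 := hconj.mul' (hdv (0, 1))
    have hT2 : HasFDerivAt (fun y => ((starRingEnd ℂ) (u y) * fderiv ℝ u y (0, 1)).im)
        (Complex.imCLM.comp ((starRingEnd ℂ) (u x) •
            ((ContinuousLinearMap.apply ℝ ℂ (0, 1)).comp (fderiv ℝ (fderiv ℝ u) x)) +
          (((Complex.conjCLE : ℂ →L[ℝ] ℂ).comp (fderiv ℝ u x)).smulRight
            (fderiv ℝ u x (0, 1))))) x :=
      Complex.imCLM.hasFDerivAt.comp x hmul2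
    have hF₁' : HasFDerivAt F₁ _ x := hT1.sub hT2
    have hT1' := hA₁x.mul hN
    have hmul2' := hconj.mul' (hdv (1, 0))
    have hT2' : HasFDerivAt (fun y => ((starRingEnd ℂ) (u y) * fderiv ℝ u y (1, 0)).im)
        (Complex.imCLM.comp ((starRingEnd ℂ) (u x) •
            ((ContinuousLinearMap.apply ℝ ℂ (1, 0)).comp (fderiv ℝ (fderiv ℝ u) x)) +
          (((Complex.conjCLE : ℂ →L[ℝ] ℂ).comp (fderiv ℝ u x)).smulRight
            (fderiv ℝ u x (1, 0))))) x :=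
      Complex.imCLM.hasFDerivAt.comp x hmul2'
    have hF₂' : HasFDerivAt F₂ _ x := (hT1'.neg).add hT2'
    rw [hF₁'.fderiv, hF₂'.fderiv]
    have hsymm : fderiv ℝ (fderiv ℝ u) x (0, 1) (1, 0)
        = fderiv ℝ (fderiv ℝ u) x (1, 0) (0, 1) :=
      ((hu.contDiffAt.isSymmSndFDerivAt (by rw [minSmoothness_of_isRCLikeNormedField]; exact (WithTop.coe_le_coe.mpr (le_top : (2 : ℕ∞) ≤ ⊤) : ((2 : ℕ∞) : WithTop ℕ∞) ≤ ((⊤ : ℕ∞) : WithTop ℕ∞)))) _ _).symm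
    simp only [ContinuousLinearMap.coe_comp', Function.comp_apply,
      ContinuousLinearMap.add_apply, ContinuousLinearMap.sub_apply,
      ContinuousLinearMap.coe_smul', Pi.smul_apply, ContinuousLinearMap.smulRight_apply,
      ContinuousLinearMap.neg_apply, ContinuousLinearMap.apply_apply, ContinuousLinearEquiv.coe_coe,
      Complex.conjCLE_apply, Complex.reCLM_apply, Complex.imCLM_apply, smul_eq_mul]
    rw [hsymm]
    simp only [Complex.sq_norm, Complex.normSq_apply,
      Complex.mul_re, Complex.mul_im, Complex.add_re, Complex.add_im,
      Complex.sub_re, Complex.sub_im, Complex.neg_re, Complex.neg_im,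
      Complex.I_re, Complex.I_im, Complex.conj_re, Complex.conj_im,
      Complex.ofReal_re, Complex.ofReal_im]
    ring
  -- continuity facts
  have hcontd : ∀ v : ℝ × ℝ, Continuous fun x => fderiv ℝ u x v :=
    fun v => (hu.continuous_fderiv (by simp)).clm_apply continuous_const
  have hPc : Continuous fun x : ℝ × ℝ => (-Complex.I) * fderiv ℝ u x (1, 0) - (A₁ x : ℂ) * u x :=
    (continuous_const.mul (hcontd (1, 0))).sub
      ((Complex.continuous_ofReal.comp hA₁.continuous).mul hu.continuous)
  have hQc : Continuous fun x : ℝ × ℝ => (-Complex.I) * fderiv ℝ u x (0, 1) - (A₂ x : ℂ) * u x :=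
    (continuous_const.mul (hcontd (0, 1))).sub
      ((Complex.continuous_ofReal.comp hA₂.continuous).mul hu.continuous)
  -- compact support facts
  have hPcs : HasCompactSupport
      fun x : ℝ × ℝ => (-Complex.I) * fderiv ℝ u x (1, 0) - (A₁ x : ℂ) * u x := by
    apply hsupp.mono'
    intro x hx
    by_contra hxt
    obtain ⟨h0, hd0⟩ := hvan x hxt
    simp only [Function.mem_support] at hx
    exact hx (by simp [h0, hd0])
  have hQcs : HasCompactSupport
      fun x : ℝ × ℝ => (-Complex.I) * fderiv ℝ u x (0, 1) - (A₂ x : ℂ) * u x := by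
    apply hsupp.mono'
    intro x hx
    by_contra hxt
    obtain ⟨h0, hd0⟩ := hvan x hxt
    simp only [Function.mem_support] at hx
    exact hx (by simp [h0, hd0])
  -- integrability facts
  have hIP : Integrable
      (fun x : ℝ × ℝ => ‖(-Complex.I) * fderiv ℝ u x (1, 0) - (A₁ x : ℂ) * u x‖ ^ 2) :=
    by
      have h := hPcs.comp_left (g := fun z : ℂ => ‖z‖ ^ 2) (by simp)
      exact (hPc.norm.pow 2).integrable_of_hasCompactSupport h
  have hIQ : Integrable
      (fun x : ℝ × ℝ => ‖(-Complex.I) * fderiv ℝ u x (0, 1) - (A₂ x : ℂ) * u x‖ ^ 2) :=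
    by
      have h := hQcs.comp_left (g := fun z : ℂ => ‖z‖ ^ 2) (by simp)
      exact (hQc.norm.pow 2).integrable_of_hasCompactSupport h
  have hI2 : Integrable (fun x : ℝ × ℝ =>
      2 * ((starRingEnd ℂ) ((-Complex.I) * fderiv ℝ u x (1, 0) - (A₁ x : ℂ) * u x)
        * ((-Complex.I) * fderiv ℝ u x (0, 1) - (A₂ x : ℂ) * u x)).im) := by
    apply Continuous.integrable_of_hasCompactSupport
    · exact continuous_const.mul
        (Complex.continuous_im.comp ((continuous_star.comp hPc).mul hQc))
    · apply hsupp.mono'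
      intro x hx
      by_contra hxt
      obtain ⟨h0, hd0⟩ := hvan x hxt
      simp only [Function.mem_support] at hx
      exact hx (by simp [h0, hd0])
  -- smoothness and support of F₁, F₂
  have hconjC : ContDiff ℝ (⊤ : ℕ∞) fun x => (starRingEnd ℂ) (u x) :=
    (Complex.conjCLE : ℂ →L[ℝ] ℂ).contDiff.comp hu
  have hdC : ∀ v : ℝ × ℝ, ContDiff ℝ (⊤ : ℕ∞) fun x => fderiv ℝ u x v :=
    fun v => (ContinuousLinearMap.apply ℝ ℂ v).contDiff.comp hu'
  have hF₁C : ContDiff ℝ 1 F₁ :=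
    ((hA₂.mul (Complex.reCLM.contDiff.comp (hconjC.mul hu))).sub
      (Complex.imCLM.contDiff.comp (hconjC.mul (hdC (0, 1))))).of_le (by simp)
  have hF₂C : ContDiff ℝ 1 F₂ :=
    (((hA₁.mul (Complex.reCLM.contDiff.comp (hconjC.mul hu))).neg).add
      (Complex.imCLM.contDiff.comp (hconjC.mul (hdC (1, 0))))).of_le (by simp)
  have hF₁cs : HasCompactSupport F₁ := by
    apply hsupp.mono'
    intro x hx
    by_contra hxt
    obtain ⟨h0, hd0⟩ := hvan x hxt
    simp only [Function.mem_support] at hx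
    exact hx (by simp [hF₁def, h0, hd0])
  have hF₂cs : HasCompactSupport F₂ := by
    apply hsupp.mono'
    intro x hx
    by_contra hxt
    obtain ⟨h0, hd0⟩ := hvan x hxt
    simp only [Function.mem_support] at hx
    exact hx (by simp [hF₂def, h0, hd0])
  have hI3 : Integrable (fun x : ℝ × ℝ => fderiv ℝ F₁ x (1, 0)) :=
    ((hF₁C.continuous_fderiv one_ne_zero).clm_apply continuous_const).integrable_of_hasCompactSupport
      (hcs_fderiv_apply hF₁cs _)
  have hI4 : Integrable (fun x : ℝ × ℝ => fderiv ℝ F₂ x (0, 1)) :=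
    ((hF₂C.continuous_fderiv one_ne_zero).clm_apply continuous_const).integrable_of_hasCompactSupport
      (hcs_fderiv_apply hF₂cs _)
  have hzero1 : ∫ x : ℝ × ℝ, fderiv ℝ F₁ x (1, 0) = 0 :=
    integral_fderiv_fst_eq_zero hF₁C hF₁cs
  have hzero2 : ∫ x : ℝ × ℝ, fderiv ℝ F₂ x (0, 1) = 0 :=
    integral_fderiv_snd_eq_zero hF₂C hF₂cs
  -- put everything together
  rw [show (fun x : ℝ × ℝ => (fderiv ℝ A₂ x (1, 0) - fderiv ℝ A₁ x (0, 1)) * ‖u x‖ ^ 2)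
      = fun x : ℝ × ℝ =>
        2 * ((starRingEnd ℂ) ((-Complex.I) * fderiv ℝ u x (1, 0) - (A₁ x : ℂ) * u x)
            * ((-Complex.I) * fderiv ℝ u x (0, 1) - (A₂ x : ℂ) * u x)).im
          + (fderiv ℝ F₁ x (1, 0) + fderiv ℝ F₂ x (0, 1)) from funext keyder]
  rw [integral_add hI2 ((hI3.add hI4 : _) :
    Integrable fun x : ℝ × ℝ => fderiv ℝ F₁ x (1, 0) + fderiv ℝ F₂ x (0, 1)),
    integral_add hI3 hI4, hzero1, hzero2, add_zero, add_zero]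
  refine le_trans (integral_mono hI2 (hIP.add hIQ) fun x => two_im_conj_mul_le _ _)
    (le_of_eq ?_)
  exact integral_add hIP hIQ
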